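/- arXiv:2102.03164 — 2 statements merged into one kernel-verified Lean document; each statement's English description precedes it below -/
import Mathlib

section
/- Let G₁ and G₂ be groups, let A₁ and A₂ be finite alphabets, and let π₁ : A₁* → G₁ and π₂ : A₂* → G₂ be surjective monoid homomorphisms from the free monoids on A₁ and A₂. Set X = A₁ ⊕ A₂ (the disjoint union), let ι₁ : A₁* → X* and ι₂ : A₂* → X* be the monoid embeddings induced by the inclusions of letters, and let π : X* → G₁ ∗ G₂ be the monoid homomorphism into the free product G₁ ∗ G₂ sending each letter of A₁ to the image of its π₁-value under the canonical inclusion G₁ → G₁ ∗ G₂, and each letter of A₂ to the image of its π₂-value under the canonical inclusion G₂ → G₁ ∗ G₂. Let L₁ = π₁⁻¹(1), L₂ = π₂⁻¹(1) and L = π⁻¹(1). Then L is the smallest subset S of X* such that: (i) the empty word ε ∈ S, and (ii) for each i ∈ {1,2}, every w ∈ Lᵢ, and all u, v ∈ X*, if u·v ∈ S then u·ιᵢ(w)·v ∈ S. That is, L itself satisfies (i) and (ii), and L is contained in every subset S of X* satisfying (i) and (ii). -/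
/-!
Deleting a factor `ιᵢ t` with `πᵢ t = 1` does not change the image under `π`, so `L` has
properties (i) and (ii). Conversely, cut a nonempty `w ∈ L` into maximal blocks of letters from a
single alphabet. Adjacent blocks come from different factors, so if no block were trivial in its
factor, their images would form a reduced word of the free product with product `π w = 1`,
contradicting the uniqueness of reduced words. Hence some block `ιᵢ t` has `πᵢ t = 1`; deleting it
gives a shorter word of `L`, and induction on the length puts `w` into every `S` with (i) and (ii).
-/

/-- The word problem of a group `G` with respect to a monoid homomorphism
`π` from a free monoid: the set of words mapping to the identity. -/
def wordProblem {α : Type} {G : Type} [Group G] (π : FreeMonoid α →* G) :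
    Set (FreeMonoid α) :=
  {w | π w = 1}

theorem MonoidHom.apply_mul_mul_eq_of_apply_eq_one {M N : Type*} [Monoid M] [Monoid N]
    (f : M →* N) {y : M} (hy : f y = 1) (x z : M) : f (x * y * z) = f (x * z) := by
  rw [map_mul, map_mul, hy, mul_one, map_mul]

namespace Monoid.CoprodI

theorem exists_mem_snd_eq_one_of_prod_eq_one {ι : Type*} {M : ι → Type*} [∀ i, Monoid (M i)]
    {l : List (Σ i, M i)} (hchain : l.IsChain fun p q => p.1 ≠ q.1) (hne : l ≠ [])
    (hprod : (l.map fun p => of p.2).prod = 1) : ∃ p ∈ l, p.2 = 1 := by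
  classical
  by_contra! hl
  let w : Word M := ⟨l, hl, hchain⟩
  have : w = .empty := Word.equiv.symm.injective (by simpa [Word.equiv, Word.prod] using hprod)
  exact hne (congrArg Word.toList this)

end Monoid.CoprodI

namespace FreeMonoid

variable {α β : Type*}

def ofBlock : FreeMonoid α ⊕ FreeMonoid β → FreeMonoid (α ⊕ β) :=
  Sum.elim (map Sum.inl) (map Sum.inr)

def consBlock : α ⊕ β → List (FreeMonoid α ⊕ FreeMonoid β) → List (FreeMonoid α ⊕ FreeMonoid β)
  | .inl a, .inl t :: cs => .inl (of a * t) :: cs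
  | .inl a, cs => .inl (of a) :: cs
  | .inr b, .inr t :: cs => .inr (of b * t) :: cs
  | .inr b, cs => .inr (of b) :: cs

def blocks (w : FreeMonoid (α ⊕ β)) : List (FreeMonoid α ⊕ FreeMonoid β) :=
  w.toList.foldr consBlock []

theorem blocks_of_mul (x : α ⊕ β) (w : FreeMonoid (α ⊕ β)) :
    blocks (of x * w) = consBlock x (blocks w) :=
  rfl

theorem prod_map_ofBlock_consBlock (x : α ⊕ β) (cs : List (FreeMonoid α ⊕ FreeMonoid β)) :
    ((consBlock x cs).map ofBlock).prod = of x * (cs.map ofBlock).prod := by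
  rcases x with a | b <;> rcases cs with _ | ⟨c | c, cs⟩ <;> simp [consBlock, ofBlock, mul_assoc]

theorem prod_map_ofBlock_blocks (w : FreeMonoid (α ⊕ β)) : ((blocks w).map ofBlock).prod = w := by
  induction w using FreeMonoid.inductionOn' with
  | one => rfl
  | of_mul x w ih => rw [blocks_of_mul, prod_map_ofBlock_consBlock, ih]

theorem ofBlock_ne_one_of_mem_consBlock {x : α ⊕ β} {cs : List (FreeMonoid α ⊕ FreeMonoid β)}
    (hcs : ∀ c ∈ cs, ofBlock c ≠ 1) : ∀ c ∈ consBlock x cs, ofBlock c ≠ 1 := by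
  rcases x with a | b <;> rcases cs with _ | ⟨c | c, cs⟩ <;> simp_all [consBlock, ofBlock]

theorem isChain_consBlock (x : α ⊕ β) {cs : List (FreeMonoid α ⊕ FreeMonoid β)}
    (hcs : cs.IsChain fun c d => c.isLeft ≠ d.isLeft) :
    (consBlock x cs).IsChain fun c d => c.isLeft ≠ d.isLeft := by
  rcases x with a | b <;> rcases cs with _ | ⟨c | c, cs⟩ <;> simp_all [consBlock, List.isChain_cons]

theorem ofBlock_ne_one_of_mem_blocks {w : FreeMonoid (α ⊕ β)} {c : FreeMonoid α ⊕ FreeMonoid β}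
    (hc : c ∈ blocks w) : ofBlock c ≠ 1 := by
  induction w using FreeMonoid.inductionOn' generalizing c with
  | one => simp [blocks] at hc
  | of_mul x w ih => exact ofBlock_ne_one_of_mem_consBlock (fun _ => ih) c hc

theorem isChain_blocks (w : FreeMonoid (α ⊕ β)) :
    (blocks w).IsChain fun c d => c.isLeft ≠ d.isLeft := by
  induction w using FreeMonoid.inductionOn' with
  | one => exact List.isChain_nil
  | of_mul x w ih => exact isChain_consBlock x ih

end FreeMonoid

universe u

instance Bool.instMonoidCond {M N : Type u} [Monoid M] [Monoid N] : ∀ b, Monoid (cond b M N)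
  | true => ‹Monoid M›
  | false => ‹Monoid N›

namespace Monoid.Coprod

variable {M N : Type u} [Monoid M] [Monoid N]

/- `Monoid.Coprod` has no theory of reduced words of its own; those of the `Bool`-indexed
free product are `Monoid.CoprodI.Word`. -/
def toCoprodICond : Monoid.Coprod M N →* Monoid.CoprodI fun b => cond b M N :=
  lift (CoprodI.of (M := fun b => cond b M N) (i := true))
    (CoprodI.of (M := fun b => cond b M N) (i := false))

variable {α β : Type*} (π₁ : FreeMonoid α →* M) (π₂ : FreeMonoid β →* N)

def blockValue : FreeMonoid α ⊕ FreeMonoid β → Σ b, cond b M N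
  | .inl t => ⟨true, π₁ t⟩
  | .inr t => ⟨false, π₂ t⟩

variable {π₁ π₂} {π : FreeMonoid (α ⊕ β) →* Monoid.Coprod M N}

theorem toCoprodICond_apply_ofBlock
    (hl : ∀ t, π (FreeMonoid.map Sum.inl t) = inl (π₁ t))
    (hr : ∀ t, π (FreeMonoid.map Sum.inr t) = inr (π₂ t)) (c : FreeMonoid α ⊕ FreeMonoid β) :
    toCoprodICond (π (FreeMonoid.ofBlock c)) =
      CoprodI.of (M := fun b => cond b M N) (blockValue π₁ π₂ c).2 := by
  rcases c with t | t
  · exact (congrArg _ (hl t)).trans (lift_apply_inl _ _ (π₁ t))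
  · exact (congrArg _ (hr t)).trans (lift_apply_inr _ _ (π₂ t))

theorem exists_mem_blocks_blockValue_eq_one
    (hl : ∀ t, π (FreeMonoid.map Sum.inl t) = inl (π₁ t))
    (hr : ∀ t, π (FreeMonoid.map Sum.inr t) = inr (π₂ t))
    {w : FreeMonoid (α ⊕ β)} (hw : π w = 1) (hne : w ≠ 1) :
    ∃ c ∈ FreeMonoid.blocks w, (blockValue π₁ π₂ c).2 = 1 := by
  have hchain : ((FreeMonoid.blocks w).map (blockValue π₁ π₂)).IsChain fun p q => p.1 ≠ q.1 := by
    rw [List.isChain_map]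
    refine (FreeMonoid.isChain_blocks w).imp fun c d hcd => ?_
    rcases c with _ | _ <;> rcases d with _ | _ <;> simp_all [blockValue]
  have hnil : (FreeMonoid.blocks w).map (blockValue π₁ π₂) ≠ [] := by
    intro h
    rw [List.map_eq_nil_iff] at h
    exact hne (by rw [← FreeMonoid.prod_map_ofBlock_blocks w, h]; rfl)
  have hprod : (((FreeMonoid.blocks w).map (blockValue π₁ π₂)).map fun p =>
      CoprodI.of (M := fun b => cond b M N) p.2).prod = 1 :=
    calc _ = ((FreeMonoid.blocks w).map fun c =>
            toCoprodICond (π (FreeMonoid.ofBlock c))).prod := by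
          simp only [List.map_map, Function.comp_def, toCoprodICond_apply_ofBlock hl hr]
      _ = toCoprodICond (π ((FreeMonoid.blocks w).map FreeMonoid.ofBlock).prod) := by
          rw [map_list_prod, map_list_prod, List.map_map, List.map_map]; rfl
      _ = 1 := by rw [FreeMonoid.prod_map_ofBlock_blocks, hw, map_one]
  obtain ⟨p, hp, hp1⟩ := Monoid.CoprodI.exists_mem_snd_eq_one_of_prod_eq_one hchain hnil hprod
  obtain ⟨c, hc, rfl⟩ := List.mem_map.mp hp
  exact ⟨c, hc, hp1⟩

theorem exists_eq_mul_map_mul_of_apply_eq_one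
    (hl : ∀ t, π (FreeMonoid.map Sum.inl t) = inl (π₁ t))
    (hr : ∀ t, π (FreeMonoid.map Sum.inr t) = inr (π₂ t))
    {w : FreeMonoid (α ⊕ β)} (hw : π w = 1) (hne : w ≠ 1) :
    ∃ u v, (u * v).length < w.length ∧
      ((∃ t, π₁ t = 1 ∧ w = u * FreeMonoid.map Sum.inl t * v) ∨
        (∃ t, π₂ t = 1 ∧ w = u * FreeMonoid.map Sum.inr t * v)) := by
  obtain ⟨c, hc, hc1⟩ := exists_mem_blocks_blockValue_eq_one hl hr hw hne
  obtain ⟨s, s', hs⟩ := List.append_of_mem hc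
  set u := (s.map FreeMonoid.ofBlock).prod
  set v := (s'.map FreeMonoid.ofBlock).prod
  have hdecomp : w = u * FreeMonoid.ofBlock c * v :=
    calc w = ((FreeMonoid.blocks w).map FreeMonoid.ofBlock).prod :=
          (FreeMonoid.prod_map_ofBlock_blocks w).symm
      _ = _ := by
          rw [hs, List.map_append, List.map_cons, List.prod_append, List.prod_cons, mul_assoc]
  have hlen : (u * v).length < w.length := by
    have hblock := FreeMonoid.length_eq_zero.not.mpr (FreeMonoid.ofBlock_ne_one_of_mem_blocks hc)
    rw [hdecomp]
    simp only [FreeMonoid.length_mul]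
    omega
  rcases c with t | t
  · exact ⟨u, v, hlen, .inl ⟨t, hc1, hdecomp⟩⟩
  · exact ⟨u, v, hlen, .inr ⟨t, hc1, hdecomp⟩⟩

theorem mem_of_apply_eq_one
    (hl : ∀ t, π (FreeMonoid.map Sum.inl t) = inl (π₁ t))
    (hr : ∀ t, π (FreeMonoid.map Sum.inr t) = inr (π₂ t))
    {S : Set (FreeMonoid (α ⊕ β))} (h1 : 1 ∈ S)
    (hS₁ : ∀ t, π₁ t = 1 → ∀ u v, u * v ∈ S → u * FreeMonoid.map Sum.inl t * v ∈ S)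
    (hS₂ : ∀ t, π₂ t = 1 → ∀ u v, u * v ∈ S → u * FreeMonoid.map Sum.inr t * v ∈ S)
    {w : FreeMonoid (α ⊕ β)} (hw : π w = 1) : w ∈ S := by
  induction hn : w.length using Nat.strong_induction_on generalizing w with
  | _ n ih =>
  rcases eq_or_ne w 1 with rfl | hne
  · exact h1
  obtain ⟨u, v, hlen, hdecomp⟩ := exists_eq_mul_map_mul_of_apply_eq_one hl hr hw hne
  have huv : ∀ x, π x = 1 → w = u * x * v → u * v ∈ S := by
    rintro x hx rfl
    exact ih _ (hn ▸ hlen) (by rwa [π.apply_mul_mul_eq_of_apply_eq_one hx] at hw) rfl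
  rcases hdecomp with ⟨t, ht, rfl⟩ | ⟨t, ht, rfl⟩
  · exact hS₁ t ht u v (huv _ (by rw [hl, ht, map_one]) rfl)
  · exact hS₂ t ht u v (huv _ (by rw [hr, ht, map_one]) rfl)

end Monoid.Coprod

theorem wordProblem_freeProduct_smallest_general
    {G₁ G₂ : Type} [Group G₁] [Group G₂]
    (A₁ A₂ : Type)
    (π₁ : FreeMonoid A₁ →* G₁) (π₂ : FreeMonoid A₂ →* G₂)
    (π : FreeMonoid (A₁ ⊕ A₂) →* Monoid.Coprod G₁ G₂)
    (hπl : ∀ a : A₁, π (FreeMonoid.of (Sum.inl a)) =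
      Monoid.Coprod.inl (π₁ (FreeMonoid.of a)))
    (hπr : ∀ b : A₂, π (FreeMonoid.of (Sum.inr b)) =
      Monoid.Coprod.inr (π₂ (FreeMonoid.of b))) :
    let ι₁ : FreeMonoid A₁ →* FreeMonoid (A₁ ⊕ A₂) := FreeMonoid.map Sum.inl
    let ι₂ : FreeMonoid A₂ →* FreeMonoid (A₁ ⊕ A₂) := FreeMonoid.map Sum.inr
    let L₁ := wordProblem π₁
    let L₂ := wordProblem π₂
    let L := wordProblem π
    ((1 : FreeMonoid (A₁ ⊕ A₂)) ∈ L ∧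
      (∀ w ∈ L₁, ∀ u v : FreeMonoid (A₁ ⊕ A₂), u * v ∈ L → u * ι₁ w * v ∈ L) ∧
      (∀ w ∈ L₂, ∀ u v : FreeMonoid (A₁ ⊕ A₂), u * v ∈ L → u * ι₂ w * v ∈ L)) ∧
    (∀ S : Set (FreeMonoid (A₁ ⊕ A₂)),
      ((1 : FreeMonoid (A₁ ⊕ A₂)) ∈ S ∧
        (∀ w ∈ L₁, ∀ u v : FreeMonoid (A₁ ⊕ A₂), u * v ∈ S → u * ι₁ w * v ∈ S) ∧
        (∀ w ∈ L₂, ∀ u v : FreeMonoid (A₁ ⊕ A₂), u * v ∈ S → u * ι₂ w * v ∈ S)) →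
      L ⊆ S) := by
  intro ι₁ ι₂ L₁ L₂ L
  have hl : ∀ t, π (ι₁ t) = Monoid.Coprod.inl (π₁ t) :=
    DFunLike.congr_fun (FreeMonoid.hom_eq (f := π.comp ι₁) (g := Monoid.Coprod.inl.comp π₁) hπl)
  have hr : ∀ t, π (ι₂ t) = Monoid.Coprod.inr (π₂ t) :=
    DFunLike.congr_fun (FreeMonoid.hom_eq (f := π.comp ι₂) (g := Monoid.Coprod.inr.comp π₂) hπr)
  refine ⟨⟨map_one π, fun t ht u v huv => ?_, fun t ht u v huv => ?_⟩,
    fun S ⟨h1, hS₁, hS₂⟩ w hw => Monoid.Coprod.mem_of_apply_eq_one hl hr h1 hS₁ hS₂ hw⟩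
  · exact (π.apply_mul_mul_eq_of_apply_eq_one (by rw [hl, ht, map_one]) u v).trans huv
  · exact (π.apply_mul_mul_eq_of_apply_eq_one (by rw [hr, ht, map_one]) u v).trans huv

/-- Lemma: the word problem of a free product `G₁ ∗ G₂` is the smallest set `S`
of words over the disjoint union alphabet `X = A₁ ⊕ A₂` such that `ε ∈ S` and,
for `i ∈ {1,2}`, for every `w` in the word problem of `Gᵢ` and all words `u, v`
over `X`, if `u · v ∈ S` then `u · ιᵢ(w) · v ∈ S`. -/
theorem wordProblem_freeProduct_smallest
    {G₁ G₂ : Type} [Group G₁] [Group G₂]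
    (A₁ A₂ : Type) [Fintype A₁] [Fintype A₂]
    (π₁ : FreeMonoid A₁ →* G₁) (π₂ : FreeMonoid A₂ →* G₂)
    (hπ₁ : Function.Surjective π₁) (hπ₂ : Function.Surjective π₂)
    (π : FreeMonoid (A₁ ⊕ A₂) →* Monoid.Coprod G₁ G₂)
    (hπl : ∀ a : A₁, π (FreeMonoid.of (Sum.inl a)) =
      Monoid.Coprod.inl (π₁ (FreeMonoid.of a)))
    (hπr : ∀ b : A₂, π (FreeMonoid.of (Sum.inr b)) =
      Monoid.Coprod.inr (π₂ (FreeMonoid.of b))) :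
    let ι₁ : FreeMonoid A₁ →* FreeMonoid (A₁ ⊕ A₂) := FreeMonoid.map Sum.inl
    let ι₂ : FreeMonoid A₂ →* FreeMonoid (A₁ ⊕ A₂) := FreeMonoid.map Sum.inr
    let L₁ := wordProblem π₁
    let L₂ := wordProblem π₂
    let L := wordProblem π
    ((1 : FreeMonoid (A₁ ⊕ A₂)) ∈ L ∧
      (∀ w ∈ L₁, ∀ u v : FreeMonoid (A₁ ⊕ A₂), u * v ∈ L → u * ι₁ w * v ∈ L) ∧
      (∀ w ∈ L₂, ∀ u v : FreeMonoid (A₁ ⊕ A₂), u * v ∈ L → u * ι₂ w * v ∈ L)) ∧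
    (∀ S : Set (FreeMonoid (A₁ ⊕ A₂)),
      ((1 : FreeMonoid (A₁ ⊕ A₂)) ∈ S ∧
        (∀ w ∈ L₁, ∀ u v : FreeMonoid (A₁ ⊕ A₂), u * v ∈ S → u * ι₁ w * v ∈ S) ∧
        (∀ w ∈ L₂, ∀ u v : FreeMonoid (A₁ ⊕ A₂), u * v ∈ S → u * ι₂ w * v ∈ S)) →
      L ⊆ S) :=
  wordProblem_freeProduct_smallest_general A₁ A₂ π₁ π₂ π hπl hπr
end

section
/- A language over a one-letter alphabet is regular if and only if it is semilinear. Precisely: let L be a language over a one-letter alphabet (e.g. the type Unit), and let S = { |w| : w ∈ L } ⊆ ℕ be its set of word lengths. Then L is regular (accepted by some deterministic finite automaton with a finite state type) if and only if S is a semilinear subset of ℕ. -/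
/-- A language is regular if it is accepted by some deterministic finite
automaton whose state type is finite. -/
def IsRegularLang {α : Type} (L : Language α) : Prop :=
  ∃ (σ : Type) (_ : Fintype σ) (M : DFA α σ), M.accepts = L

/-- A subset `S ⊆ ℕ` is linear if
`S = { p + a₁p₁ + ⋯ + aₖpₖ : a₁, …, aₖ ∈ ℕ }` for some fixed
`p, p₁, …, pₖ ∈ ℕ`. -/
def IsLinearNatSet (S : Set ℕ) : Prop :=
  ∃ (p : ℕ) (k : ℕ) (ps : Fin k → ℕ),
    S = {m | ∃ a : Fin k → ℕ, m = p + ∑ i, a i * ps i}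

/-- A subset of `ℕ` is semilinear if it is a finite union of linear subsets. -/
def IsSemilinearNatSet (S : Set ℕ) : Prop :=
  ∃ (n : ℕ) (T : Fin n → Set ℕ), (∀ i, IsLinearNatSet (T i)) ∧ S = ⋃ i, T i

/-!
Both conditions say that the set `S` of word lengths is eventually periodic. For regularity this
is Myhill–Nerode: the left quotient of a unary language by a word of length `k` is encoded by the
shifted set `(k + ·) ⁻¹' S`, and finitely many shifts of `S` occur iff two of them coincide, which
is eventual periodicity. A linear set with a positive period `d` is closed under `+ d`, hence
eventually periodic; conversely an eventually periodic set is a finite set together with finitely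
many arithmetic progressions.
-/

open Set

def IsEventuallyPeriodicNatSet (S : Set ℕ) : Prop :=
  ∃ N d, 0 < d ∧ ∀ n, N ≤ n → (n + d ∈ S ↔ n ∈ S)

lemma Nat.exists_eq_add_mul_of_le {N d m : ℕ} (hd : 0 < d) (hm : N ≤ m) :
    ∃ r a, N ≤ r ∧ r < N + d ∧ m = r + a * d :=
  ⟨N + (m - N) % d, (m - N) / d, Nat.le_add_right N _,
    by have := Nat.mod_lt (m - N) hd; omega,
    by have := Nat.mod_add_div (m - N) d; rw [mul_comm]; omega⟩

section Periodicity

variable {S : Set ℕ} {N d : ℕ}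

lemma add_mul_mem_iff_of_periodic (hS : ∀ n, N ≤ n → (n + d ∈ S ↔ n ∈ S)) (a : ℕ) {n : ℕ}
    (hn : N ≤ n) : n + a * d ∈ S ↔ n ∈ S := by
  induction a with
  | zero => simp
  | succ a ih => rw [add_one_mul, ← add_assoc, hS _ (by omega), ih]

lemma add_mul_mem_of_forall_add_mem (hS : ∀ n ∈ S, n + d ∈ S) (a : ℕ) {n : ℕ} (hn : n ∈ S) :
    n + a * d ∈ S := by
  induction a with
  | zero => simpa
  | succ a ih => rw [add_one_mul, ← add_assoc]; exact hS _ ih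

end Periodicity

lemma isEventuallyPeriodicNatSet_iff_finite_range_preimage_add {S : Set ℕ} :
    IsEventuallyPeriodicNatSet S ↔ (range fun k => (k + ·) ⁻¹' S).Finite := by
  constructor
  · rintro ⟨N, d, hd, hS⟩
    refine ((finite_Iio (N + d)).image fun k => (k + ·) ⁻¹' S).subset ?_
    rintro _ ⟨k, rfl⟩
    by_cases hk : k < N + d
    · exact ⟨k, hk, rfl⟩
    obtain ⟨r, a, hNr, hr, rfl⟩ := Nat.exists_eq_add_mul_of_le hd (by omega : N ≤ k)
    refine ⟨r, hr, ?_⟩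
    ext n
    simp only [mem_preimage]
    rw [show r + a * d + n = r + n + a * d by ring, add_mul_mem_iff_of_periodic hS a (by omega)]
  · intro h
    obtain ⟨m, n, hmn, hshift⟩ :=
      h.exists_lt_map_eq_of_forall_mem (f := fun k => (k + ·) ⁻¹' S) mem_range_self
    refine ⟨m, n - m, by omega, fun k hk => ?_⟩
    have := congrArg (k - m ∈ ·) hshift
    simp only [mem_preimage, eq_iff_iff] at this
    rw [show k + (n - m) = n + (k - m) by omega, ← this, show m + (k - m) = k by omega]

lemma IsEventuallyPeriodicNatSet.iUnion {ι : Type*} [Finite ι] {T : ι → Set ℕ}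
    (hT : ∀ i, IsEventuallyPeriodicNatSet (T i)) : IsEventuallyPeriodicNatSet (⋃ i, T i) := by
  simp only [isEventuallyPeriodicNatSet_iff_finite_range_preimage_add] at hT ⊢
  refine (((Finite.pi hT).image fun F => ⋃ i, F i)).subset ?_
  rintro _ ⟨k, rfl⟩
  exact ⟨fun i => (k + ·) ⁻¹' T i, fun i _ => ⟨k, rfl⟩, (preimage_iUnion).symm⟩

lemma Set.Finite.isEventuallyPeriodicNatSet {S : Set ℕ} (hS : S.Finite) :
    IsEventuallyPeriodicNatSet S := by
  obtain ⟨B, hB⟩ := hS.bddAbove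
  exact ⟨B + 1, 1, one_pos, fun n hn =>
    iff_of_false (fun h => by have := hB h; omega) (fun h => by have := hB h; omega)⟩

lemma isEventuallyPeriodicNatSet_of_forall_add_mem {S : Set ℕ} {d : ℕ} (hd : 0 < d)
    (hS : ∀ n ∈ S, n + d ∈ S) : IsEventuallyPeriodicNatSet S := by
  -- beyond the least element of `S` in each residue class mod `d`, the whole class lies in `S`
  let least : ℕ → ℕ := fun r => sInf {m ∈ S | m % d = r}
  refine ⟨(Finset.range d).sup least, d, hd, fun n hn => ⟨fun hnd => ?_, hS n⟩⟩
  have hmem : least (n % d) ∈ {m ∈ S | m % d = n % d} := Nat.sInf_mem ⟨n + d, hnd, by simp⟩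
  have hle : least (n % d) ≤ n :=
    (Finset.le_sup (Finset.mem_range.2 (Nat.mod_lt n hd))).trans hn
  obtain ⟨a, ha⟩ := (Nat.modEq_iff_dvd' hle).1 hmem.2
  rw [show n = least (n % d) + a * d by rw [mul_comm, ← ha]; omega]
  exact add_mul_mem_of_forall_add_mem hS a hmem.1

lemma IsLinearNatSet.isEventuallyPeriodicNatSet {S : Set ℕ} (hS : IsLinearNatSet S) :
    IsEventuallyPeriodicNatSet S := by
  obtain ⟨p, k, ps, rfl⟩ := hS
  by_cases hpos : ∃ i, 0 < ps i
  · obtain ⟨i, hi⟩ := hpos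
    refine isEventuallyPeriodicNatSet_of_forall_add_mem hi ?_
    rintro _ ⟨a, rfl⟩
    exact ⟨a + Pi.single i 1,
      by simp [add_mul, Finset.sum_add_distrib, add_assoc, Pi.single_apply]⟩
  · simp only [not_exists, not_lt] at hpos
    refine ((finite_singleton p).subset ?_).isEventuallyPeriodicNatSet
    rintro _ ⟨a, rfl⟩
    simp [Nat.le_zero.mp (hpos _)]

lemma IsSemilinearNatSet.isEventuallyPeriodicNatSet {S : Set ℕ} (hS : IsSemilinearNatSet S) :
    IsEventuallyPeriodicNatSet S := by
  obtain ⟨n, T, hT, rfl⟩ := hS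
  exact .iUnion fun i => (hT i).isEventuallyPeriodicNatSet

lemma isLinearNatSet_singleton (p : ℕ) : IsLinearNatSet {p} :=
  ⟨p, 0, Fin.elim0, by ext; simp⟩

lemma isLinearNatSet_arithmetic (p d : ℕ) : IsLinearNatSet {m | ∃ a, m = p + a * d} := by
  refine ⟨p, 1, fun _ => d, ?_⟩
  ext m
  exact ⟨fun ⟨a, ha⟩ => ⟨fun _ => a, by simpa using ha⟩, fun ⟨a, ha⟩ => ⟨a 0, by simpa using ha⟩⟩

lemma isSemilinearNatSet_iUnion_of_isLinearNatSet {ι : Type*} [Finite ι] {T : ι → Set ℕ}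
    (hT : ∀ i, IsLinearNatSet (T i)) : IsSemilinearNatSet (⋃ i, T i) := by
  obtain ⟨n, ⟨e⟩⟩ := Finite.exists_equiv_fin ι
  exact ⟨n, T ∘ e.symm, fun j => hT _, (e.symm.surjective.iUnion_comp T).symm⟩

lemma IsSemilinearNatSet.union {S S' : Set ℕ} (hS : IsSemilinearNatSet S)
    (hS' : IsSemilinearNatSet S') : IsSemilinearNatSet (S ∪ S') := by
  obtain ⟨n, T, hT, rfl⟩ := hS
  obtain ⟨n', T', hT', rfl⟩ := hS'
  have := isSemilinearNatSet_iUnion_of_isLinearNatSet (T := Sum.elim T T') (Sum.rec hT hT')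
  rwa [iUnion_sum] at this

lemma IsEventuallyPeriodicNatSet.isSemilinearNatSet {S : Set ℕ}
    (hS : IsEventuallyPeriodicNatSet S) : IsSemilinearNatSet S := by
  obtain ⟨N, d, hd, hS⟩ := hS
  have hdecomp : S = (⋃ r : ↥(S ∩ Iio N), {(r : ℕ)}) ∪
      ⋃ r : ↥(S ∩ Ico N (N + d)), {m | ∃ a, m = r + a * d} := by
    ext m
    simp only [mem_union, mem_iUnion, mem_singleton_iff, Subtype.exists,
      mem_inter_iff, mem_Iio, mem_Ico, exists_prop]
    constructor
    · intro hm
      by_cases hmN : m < N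
      · exact .inl ⟨m, ⟨hm, hmN⟩, rfl⟩
      obtain ⟨r, a, hNr, hr, rfl⟩ := Nat.exists_eq_add_mul_of_le hd (not_lt.1 hmN)
      exact .inr ⟨r, ⟨(add_mul_mem_iff_of_periodic hS a hNr).1 hm, hNr, hr⟩, a, rfl⟩
    · rintro (⟨r, ⟨hr, -⟩, rfl⟩ | ⟨r, ⟨hr, hNr, -⟩, a, rfl⟩)
      · exact hr
      · exact (add_mul_mem_iff_of_periodic hS a hNr).2 hr
  have : Finite ↥(S ∩ Iio N) := ((finite_Iio N).inter_of_right S).to_subtype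
  have : Finite ↥(S ∩ Ico N (N + d)) := ((finite_Ico N (N + d)).inter_of_right S).to_subtype
  rw [hdecomp]
  exact (isSemilinearNatSet_iUnion_of_isLinearNatSet fun r : ↥(S ∩ Iio N) =>
      isLinearNatSet_singleton r).union
    (isSemilinearNatSet_iUnion_of_isLinearNatSet fun r : ↥(S ∩ Ico N (N + d)) =>
      isLinearNatSet_arithmetic r d)

lemma List.replicate_length_default {α : Type*} [Unique α] (w : List α) :
    List.replicate w.length default = w :=
  (Equiv.listUniqueEquiv α).symm_apply_apply w

namespace Language

variable {α : Type*} [Unique α]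

lemma image_length_eq (L : Language α) :
    List.length '' L = {n | List.replicate n default ∈ L} := by
  ext n
  constructor
  · rintro ⟨w, hw, rfl⟩
    rw [← List.replicate_length_default w] at hw
    exact hw
  · exact fun h => ⟨_, h, List.length_replicate⟩

lemma replicate_mem_leftQuotient_iff (L : Language α) (x : List α) (n : ℕ) :
    List.replicate n default ∈ L.leftQuotient x ↔ List.replicate (x.length + n) default ∈ L := by
  rw [mem_leftQuotient, ← List.replicate_length_default (x ++ _), List.length_append,
    List.length_replicate]

lemma isRegular_iff_finite_range_preimage_add (L : Language α) :
    L.IsRegular ↔ (range fun k => (k + ·) ⁻¹' {n | List.replicate n default ∈ L}).Finite := by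
  let lengths : Language α → Set ℕ := fun L => {n | List.replicate n default ∈ L}
  have hinj : Function.Injective lengths := fun L L' h => by
    ext w
    rw [← List.replicate_length_default w]
    exact Set.ext_iff.1 h w.length
  have hcomp : lengths ∘ L.leftQuotient = (fun k => (k + ·) ⁻¹' lengths L) ∘ List.length :=
    funext fun x => Set.ext fun n => replicate_mem_leftQuotient_iff L x n
  have hsurj : Function.Surjective (List.length : List α → ℕ) :=
    (Equiv.listUniqueEquiv α).surjective
  rw [isRegular_iff_finite_range_leftQuotient, ← finite_image_iff hinj.injOn, ← range_comp, hcomp,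
    hsurj.range_comp]

end Language

/-- A language over a one-letter alphabet is regular if and only if its set of
word lengths is a semilinear subset of `ℕ`. -/
theorem regular_iff_semilinear_of_oneLetter (L : Language Unit) :
    IsRegularLang L ↔ IsSemilinearNatSet (List.length '' L) := by
  rw [Language.image_length_eq]
  calc IsRegularLang L
      ↔ IsEventuallyPeriodicNatSet {n | List.replicate n () ∈ L} :=
        (Language.isRegular_iff_finite_range_preimage_add L).trans
          isEventuallyPeriodicNatSet_iff_finite_range_preimage_add.symm
    _ ↔ IsSemilinearNatSet {n | List.replicate n () ∈ L} :=
        ⟨IsEventuallyPeriodicNatSet.isSemilinearNatSet,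
          IsSemilinearNatSet.isEventuallyPeriodicNatSet⟩
end
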